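/- arXiv:1403.5719 — 3 statements merged into one kernel-verified Lean document; each statement's English description precedes it below -/
import Mathlib

section
/- Uspenskii's formula: let $\bar{a} = (a_i)_{i<n}$ and $\bar{b} = (b_i)_{i<n}$ be enumerated finite metric spaces (of the same size $n$). Define $r_{0,n}(\bar{a}, \bar{b}) = \inf_f \max_{i < n} f(a_i, b_i)$, where $f$ ranges over bi-Katetov functions on $\bar{a} \times \bar{b}$. Then $r_{0,n}(\bar{a}, \bar{b}) = \varepsilon/2$ where $\varepsilon = \max_{i,k < n} |d(a_i, a_k) - d(b_i, b_k)|$. -/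
/-- Uspenskii's formula: for enumerated finite metric spaces `(a_i)_{i<n}` and `(b_i)_{i<n}`,
the infimum of `max_i f(a_i, b_i)` over bi-Katetov functions `f` equals
`(1/2) max_{i,k} |d(a_i,a_k) - d(b_i,b_k)|`. -/
theorem uspenskii_formula {A B : Type*} [MetricSpace A] [MetricSpace B]
    (n : ℕ) (hn : 0 < n) (a : Fin n → A) (b : Fin n → B) :
    sInf {m : ℝ | ∃ f : Fin n → Fin n → ℝ,
        (∀ i j, 0 ≤ f i j) ∧
        (∀ i k j, |f i j - f k j| ≤ dist (a i) (a k)) ∧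
        (∀ i j k, |f i j - f i k| ≤ dist (b j) (b k)) ∧
        (∀ i k j, dist (a i) (a k) ≤ f i j + f k j) ∧
        (∀ i j k, dist (b j) (b k) ≤ f i j + f i k) ∧
        m = ⨆ i : Fin n, f i i}
      = (⨆ i : Fin n, ⨆ k : Fin n, |dist (a i) (a k) - dist (b i) (b k)|) / 2 := by
  haveI : Nonempty (Fin n) := ⟨⟨0, hn⟩⟩
  set ε : ℝ := ⨆ i : Fin n, ⨆ k : Fin n, |dist (a i) (a k) - dist (b i) (b k)| with hε
  have hεge : ∀ p q : Fin n, |dist (a p) (a q) - dist (b p) (b q)| ≤ ε := by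
    intro p q
    refine le_trans (le_ciSup (f := fun k : Fin n => |dist (a p) (a k) - dist (b p) (b k)|)
      (Set.Finite.bddAbove (Set.finite_range _)) q) ?_
    exact le_ciSup (f := fun i => ⨆ k : Fin n, |dist (a i) (a k) - dist (b i) (b k)|)
      (Set.Finite.bddAbove (Set.finite_range _)) p
  have hε0 : 0 ≤ ε := le_trans (abs_nonneg _) (hεge ⟨0, hn⟩ ⟨0, hn⟩)
  -- the witness function
  set g : Fin n → Fin n → Fin n → ℝ :=
    fun i j k => dist (a i) (a k) + ε / 2 + dist (b k) (b j) with hg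
  set f : Fin n → Fin n → ℝ := fun i j => ⨅ k, g i j k with hf
  have hbdd : ∀ i j, BddBelow (Set.range (g i j)) :=
    fun i j => Set.Finite.bddBelow (Set.finite_range _)
  have hfle : ∀ i j k, f i j ≤ g i j k := fun i j k => ciInf_le (hbdd i j) k
  have hmin : ∀ i j, ∃ p, f i j = g i j p := by
    intro i j
    obtain ⟨p, hp⟩ := Finite.exists_min (g i j)
    exact ⟨p, le_antisymm (hfle i j p) (le_ciInf hp)⟩
  have hterm_ge : ∀ i j k, ε / 2 ≤ g i j k := by
    intro i j k
    have := dist_nonneg (x := a i) (y := a k)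
    have := dist_nonneg (x := b k) (y := b j)
    simp only [hg]; linarith
  have hf0 : ∀ i j, 0 ≤ f i j :=
    fun i j => le_ciInf fun k => le_trans (by linarith) (hterm_ge i j k)
  have hlip1 : ∀ i k j, |f i j - f k j| ≤ dist (a i) (a k) := by
    intro i k j
    rw [abs_sub_le_iff]
    constructor
    · have : f i j - dist (a i) (a k) ≤ f k j := by
        refine le_ciInf fun p => ?_
        have h1 := hfle i j p
        have h2 := dist_triangle (a i) (a k) (a p)
        simp only [hg] at h1 ⊢; linarith
      linarith
    · have : f k j - dist (a i) (a k) ≤ f i j := by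
        refine le_ciInf fun p => ?_
        have h1 := hfle k j p
        have h2 := dist_triangle (a k) (a i) (a p)
        rw [dist_comm (a k) (a i)] at h2
        simp only [hg] at h1 ⊢; linarith
      linarith
  have hlip2 : ∀ i j k, |f i j - f i k| ≤ dist (b j) (b k) := by
    intro i j k
    rw [abs_sub_le_iff]
    constructor
    · have : f i j - dist (b j) (b k) ≤ f i k := by
        refine le_ciInf fun p => ?_
        have h1 := hfle i j p
        have h2 := dist_triangle (b p) (b k) (b j)
        rw [dist_comm (b k) (b j)] at h2
        simp only [hg] at h1 ⊢; linarith
      linarith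
    · have : f i k - dist (b j) (b k) ≤ f i j := by
        refine le_ciInf fun p => ?_
        have h1 := hfle i k p
        have h2 := dist_triangle (b p) (b j) (b k)
        simp only [hg] at h1 ⊢; linarith
      linarith
  have hkat1 : ∀ i k j, dist (a i) (a k) ≤ f i j + f k j := by
    intro i k j
    obtain ⟨p, hp⟩ := hmin i j
    obtain ⟨q, hq⟩ := hmin k j
    have h1 : dist (a p) (a q) - dist (b p) (b q) ≤ ε :=
      le_trans (le_abs_self _) (hεge p q)
    have h2 := dist_triangle (a i) (a p) (a q)
    have h3 := dist_triangle (a i) (a q) (a k)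
    have h4 := dist_triangle (b p) (b j) (b q)
    rw [dist_comm (a q) (a k)] at h3
    rw [dist_comm (b j) (b q)] at h4
    rw [hp, hq]; simp only [hg]; linarith
  have hkat2 : ∀ i j k, dist (b j) (b k) ≤ f i j + f i k := by
    intro i j k
    obtain ⟨p, hp⟩ := hmin i j
    obtain ⟨q, hq⟩ := hmin i k
    have h1 : dist (b p) (b q) - dist (a p) (a q) ≤ ε := by
      have := hεge p q
      rw [abs_sub_le_iff] at this
      exact this.2
    have h2 := dist_triangle (b j) (b p) (b q)
    have h3 := dist_triangle (b j) (b q) (b k)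
    have h4 := dist_triangle (a p) (a i) (a q)
    rw [dist_comm (b j) (b p)] at h2
    rw [dist_comm (a p) (a i)] at h4
    rw [hp, hq]; simp only [hg]; linarith
  have hdiag : ∀ i, f i i = ε / 2 := by
    intro i
    refine le_antisymm ?_ (le_ciInf fun k => hterm_ge i i k)
    have := hfle i i i
    simp only [hg, dist_self] at this
    linarith
  have hsup : (⨆ i : Fin n, f i i) = ε / 2 := by
    have : (fun i : Fin n => f i i) = fun _ => ε / 2 := funext hdiag
    rw [this, ciSup_const]
  have hmem : ε / 2 ∈ {m : ℝ | ∃ f : Fin n → Fin n → ℝ,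
        (∀ i j, 0 ≤ f i j) ∧
        (∀ i k j, |f i j - f k j| ≤ dist (a i) (a k)) ∧
        (∀ i j k, |f i j - f i k| ≤ dist (b j) (b k)) ∧
        (∀ i k j, dist (a i) (a k) ≤ f i j + f k j) ∧
        (∀ i j k, dist (b j) (b k) ≤ f i j + f i k) ∧
        m = ⨆ i : Fin n, f i i} :=
    ⟨f, hf0, hlip1, hlip2, hkat1, hkat2, hsup.symm⟩
  have hlb : ∀ m ∈ {m : ℝ | ∃ f : Fin n → Fin n → ℝ,
        (∀ i j, 0 ≤ f i j) ∧
        (∀ i k j, |f i j - f k j| ≤ dist (a i) (a k)) ∧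
        (∀ i j k, |f i j - f i k| ≤ dist (b j) (b k)) ∧
        (∀ i k j, dist (a i) (a k) ≤ f i j + f k j) ∧
        (∀ i j k, dist (b j) (b k) ≤ f i j + f i k) ∧
        m = ⨆ i : Fin n, f i i}, ε / 2 ≤ m := by
    rintro m ⟨F, hF0, hFl1, hFl2, hFk1, hFk2, rfl⟩
    have hFle : ∀ i : Fin n, F i i ≤ ⨆ i : Fin n, F i i :=
      fun i => le_ciSup (f := fun i : Fin n => F i i)
        (Set.Finite.bddAbove (Set.finite_range _)) i
    have key : ∀ p q : Fin n, |dist (a p) (a q) - dist (b p) (b q)| ≤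
        2 * ⨆ i : Fin n, F i i := by
      intro p q
      rw [abs_sub_le_iff]
      constructor
      · have h1 := hFk1 p q q
        have h2 := hFl2 p q p
        rw [abs_sub_le_iff] at h2
        have h3 : dist (b q) (b p) = dist (b p) (b q) := dist_comm _ _
        have := hFle p; have := hFle q
        linarith [h2.1]
      · have h1 := hFk2 p p q
        have h2 := hFl1 p q q
        rw [abs_sub_le_iff] at h2
        have := hFle p; have := hFle q
        linarith [h2.1]
    have : ε ≤ 2 * ⨆ i : Fin n, F i i := by
      rw [hε]
      exact ciSup_le fun p => ciSup_le fun q => key p q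
    linarith
  exact le_antisymm (csInf_le ⟨ε / 2, hlb⟩ hmem) (le_csInf ⟨ε / 2, hmem⟩ hlb)
end

section
/- Extension of bi-Katetov functions by amalgamation: let $(X, d_X)$ and $(Y, d_Y)$ be metric spaces, let $A \subseteq X$ and $B \subseteq Y$ be nonempty subsets, and let $f$ be a bi-Katetov function on $A \times B$. Then the function $f'(x,y) = \inf_{a \in A, b \in B} \left( d_X(x,a) + f(a,b) + d_Y(b,y) \right)$ is a bi-Katetov function on $X \times Y$ that extends $f$ (i.e., $f'(a,b) = f(a,b)$ for $a \in A$, $b \in B$). -/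
/-- The amalgamation extension of a partial bi-Katetov function. -/
noncomputable def amalgExt {X Y : Type*} [MetricSpace X] [MetricSpace Y]
    (A : Set X) (B : Set Y) (f : X → Y → ℝ) (x : X) (y : Y) : ℝ :=
  ⨅ p : A × B, (dist x (p.1 : X) + f p.1 p.2 + dist (p.2 : Y) y)

/-- Extension of bi-Katetov functions by amalgamation: a bi-Katetov function on `A × B`
extends to a bi-Katetov function on `X × Y`. -/
theorem biKatetov_extension {X Y : Type*} [MetricSpace X] [MetricSpace Y]
    (A : Set X) (B : Set Y) (hA : A.Nonempty) (hB : B.Nonempty) (f : X → Y → ℝ)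
    (h0 : ∀ a ∈ A, ∀ b ∈ B, 0 ≤ f a b)
    (h1 : ∀ a ∈ A, ∀ a' ∈ A, ∀ b ∈ B, |f a b - f a' b| ≤ dist a a')
    (h2 : ∀ a ∈ A, ∀ b ∈ B, ∀ b' ∈ B, |f a b - f a b'| ≤ dist b b')
    (h3 : ∀ a ∈ A, ∀ a' ∈ A, ∀ b ∈ B, dist a a' ≤ f a b + f a' b)
    (h4 : ∀ a ∈ A, ∀ b ∈ B, ∀ b' ∈ B, dist b b' ≤ f a b + f a b') :
    (∀ x y, 0 ≤ amalgExt A B f x y) ∧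
    (∀ x x' y, |amalgExt A B f x y - amalgExt A B f x' y| ≤ dist x x') ∧
    (∀ x y y', |amalgExt A B f x y - amalgExt A B f x y'| ≤ dist y y') ∧
    (∀ x x' y, dist x x' ≤ amalgExt A B f x y + amalgExt A B f x' y) ∧
    (∀ x y y', dist y y' ≤ amalgExt A B f x y + amalgExt A B f x y') ∧
    (∀ a ∈ A, ∀ b ∈ B, amalgExt A B f a b = f a b) := by
  have hne : Nonempty (↥A × ↥B) := ⟨⟨⟨hA.choose, hA.choose_spec⟩, ⟨hB.choose, hB.choose_spec⟩⟩⟩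
  have hpos : ∀ (x : X) (y : Y) (p : ↥A × ↥B),
      0 ≤ dist x (p.1 : X) + f p.1 p.2 + dist (p.2 : Y) y := by
    intro x y p
    have := h0 p.1 p.1.2 p.2 p.2.2
    have d1 := dist_nonneg (x := x) (y := (p.1 : X))
    have d2 := dist_nonneg (x := (p.2 : Y)) (y := y)
    linarith
  have hbdd : ∀ (x : X) (y : Y), BddBelow (Set.range fun p : ↥A × ↥B =>
      dist x (p.1 : X) + f p.1 p.2 + dist (p.2 : Y) y) := by
    intro x y
    exact ⟨0, by rintro _ ⟨p, rfl⟩; exact hpos x y p⟩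
  have keyx : ∀ (x x' : X) (y : Y), amalgExt A B f x y ≤ amalgExt A B f x' y + dist x x' := by
    intro x x' y
    rw [amalgExt, amalgExt, ciInf_add (hbdd x' y)]
    refine ciInf_mono (hbdd x y) ?_
    intro p
    have := dist_triangle x x' (p.1 : X)
    linarith
  have keyy : ∀ (x : X) (y y' : Y), amalgExt A B f x y ≤ amalgExt A B f x y' + dist y y' := by
    intro x y y'
    rw [amalgExt, amalgExt, ciInf_add (hbdd x y')]
    refine ciInf_mono (hbdd x y) ?_
    intro p
    have := dist_triangle (p.2 : Y) y' y
    have := dist_comm y y'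
    linarith
  have hnn : ∀ x y, 0 ≤ amalgExt A B f x y := by
    intro x y
    exact Real.iInf_nonneg (hpos x y)
  refine ⟨hnn, ?_, ?_, ?_, ?_, ?_⟩
  · intro x x' y
    rw [abs_sub_le_iff]
    have := keyx x x' y
    have := keyx x' x y
    have := dist_comm x x'
    constructor <;> linarith
  · intro x y y'
    rw [abs_sub_le_iff]
    have := keyy x y y'
    have := keyy x y' y
    have := dist_comm y y'
    constructor <;> linarith
  · intro x x' y
    rw [amalgExt, amalgExt, ← sub_le_iff_le_add]
    refine le_ciInf fun q => ?_
    rw [sub_le_comm]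
    refine le_ciInf fun p => ?_
    rw [sub_le_iff_le_add]
    obtain ⟨⟨a, ha⟩, ⟨b, hb⟩⟩ := q
    obtain ⟨⟨a', ha'⟩, ⟨b', hb'⟩⟩ := p
    simp only
    have t1 := dist_triangle x a a'
    have t2 := dist_triangle a a' x'
    have t3 := dist_triangle x a x'
    have t4 : dist x x' ≤ dist x a + dist a a' + dist a' x' := by
      have := dist_triangle x a' x'
      linarith [dist_triangle x a a']
    have t5 := h3 a ha a' ha' b hb
    have t6 := abs_le.mp (h2 a' ha' b hb b' hb')
    have t7 := dist_triangle b y b'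
    have t8 := dist_comm y b'
    have t9 := dist_comm a' x'
    linarith [t6.2]
  · intro x y y'
    rw [amalgExt, amalgExt, ← sub_le_iff_le_add]
    refine le_ciInf fun q => ?_
    rw [sub_le_comm]
    refine le_ciInf fun p => ?_
    rw [sub_le_iff_le_add]
    obtain ⟨⟨a, ha⟩, ⟨b, hb⟩⟩ := q
    obtain ⟨⟨a', ha'⟩, ⟨b', hb'⟩⟩ := p
    simp only
    have t4 : dist y y' ≤ dist y b + dist b b' + dist b' y' := by
      have := dist_triangle y b' y'
      linarith [dist_triangle y b b']
    have t5 := h4 a ha b hb b' hb'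
    have t6 := abs_le.mp (h1 a ha a' ha' b' hb')
    have t7 := dist_triangle a x a'
    have t8 := dist_comm a x
    have t9 := dist_comm y b
    linarith [t6.2]
  · intro a ha b hb
    apply le_antisymm
    · have := ciInf_le (hbdd a b) (⟨⟨a, ha⟩, ⟨b, hb⟩⟩ : ↥A × ↥B)
      simpa [amalgExt] using this
    · refine le_ciInf fun p => ?_
      have l1 := abs_le.mp (h1 a ha p.1 p.1.2 b hb)
      have l2 := abs_le.mp (h2 p.1 p.1.2 b hb p.2 p.2.2)
      have := dist_comm (p.2 : Y) b
      linarith [l1.2, l2.2]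
end

section
/- Let $U_s \subseteq 2^{<\omega}$ for $s \in \mathbb{N}$ be a sequence of sets of binary strings with $U_0 = \emptyset$ satisfying: (a) if $\tau \in U_s \setminus U_{s+1}$ then there exists $\sigma \prec \tau$ with $\sigma \in U_{s+1} \setminus U_s$; and (b) for every string $\sigma$ and every $s$, if $\mathrm{wt}(\sigma^{\prec} \cap U_s) > 2^{-|\sigma|}$ then $\sigma \in U_s$. Then the weights are monotone: $\mathrm{wt}(U_s) \le \mathrm{wt}(U_{s+1})$ for all $s$, provided at each step the set of strings entering $U_{s+1}\setminus U_s$ has a (prefix-)minimal element above every removed string. More precisely: if $\sigma$ is prefix-minimal in $U_{s+1} \setminus U_s$, then the total weight of strings in $(U_s \setminus U_{s+1}) \cap \sigma^{\prec}$ is at most $2^{-|\sigma|}$. -/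
open scoped ENNReal

/-- The weight of a set of binary strings: `wt(X) = ∑_{σ ∈ X} 2^{-|σ|}`. -/
noncomputable def wt (X : Set (List Bool)) : ℝ≥0∞ :=
  ∑' σ : X, (2 : ℝ≥0∞) ^ (-((σ : List Bool).length : ℤ))

/-!
A string `τ` leaving the test at stage `s + 1` has, by (a), a proper prefix entering at that
stage, and hence a prefix-minimal entering string `σ` below it. Since `σ ∉ U s`, condition (b)
bounds the weight of everything in `U s` above `σ`, in particular of the removed strings above
`σ`, by `2^{-|σ|}`. So the weight lost at stage `s + 1` is at most the weight of the minimal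
entering strings, which is at most the weight gained.
-/

/-- `σ^≺` in the paper. -/
def properExtensions {α : Type*} (σ : List α) : Set (List α) :=
  {τ | σ <+: τ ∧ σ ≠ τ}

def prefixMinimals {α : Type*} (S : Set (List α)) : Set (List α) :=
  {σ ∈ S | ∀ σ' ∈ S, σ' <+: σ → σ' = σ}

theorem exists_prefixMinimals_isPrefix {α : Type*} {S : Set (List α)} {τ : List α}
    (hτ : τ ∈ S) : ∃ σ ∈ prefixMinimals S, σ <+: τ := by
  obtain ⟨σ, ⟨hσS, hστ⟩, hmin⟩ :=
    (measure (List.length (α := α))).wf.has_min {σ | σ ∈ S ∧ σ <+: τ} ⟨τ, hτ, List.prefix_rfl⟩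
  refine ⟨σ, ⟨hσS, fun σ' hσ'S hσ'σ => ?_⟩, hστ⟩
  have hlen : ¬σ'.length < σ.length := hmin σ' ⟨hσ'S, hσ'σ.trans hστ⟩
  exact hσ'σ.eq_of_length (le_antisymm hσ'σ.length_le (not_lt.mp hlen))

theorem wt_mono {X Y : Set (List Bool)} (h : X ⊆ Y) : wt X ≤ wt Y :=
  ENNReal.tsum_mono_subtype (fun σ : List Bool => (2 : ℝ≥0∞) ^ (-(σ.length : ℤ))) h

theorem wt_inter_add_wt_diff (X Y : Set (List Bool)) : wt (X ∩ Y) + wt (X \ Y) = wt X := by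
  unfold wt
  rw [← ENNReal.summable.tsum_union_disjoint
    (f := fun σ : List Bool => (2 : ℝ≥0∞) ^ (-(σ.length : ℤ)))
    Set.disjoint_sdiff_inter.symm ENNReal.summable, Set.inter_union_sdiff]

theorem wt_le_of_subset_biUnion {X M : Set (List Bool)} {T : List Bool → Set (List Bool)}
    (hX : X ⊆ ⋃ σ ∈ M, T σ) (hT : ∀ σ ∈ M, wt (T σ) ≤ (2 : ℝ≥0∞) ^ (-(σ.length : ℤ))) :
    wt X ≤ wt M :=
  calc wt X ≤ wt (⋃ σ ∈ M, T σ) := wt_mono hX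
    _ ≤ ∑' σ : M, wt (T σ) :=
        ENNReal.tsum_biUnion_le_tsum (fun σ : List Bool => (2 : ℝ≥0∞) ^ (-(σ.length : ℤ))) _ _
    _ ≤ wt M := ENNReal.tsum_le_tsum fun σ => hT σ σ.2

theorem wt_inter_properExtensions_le {V : Set (List Bool)}
    (hb : ∀ σ, (2 : ℝ≥0∞) ^ (-(σ.length : ℤ)) <
        wt {τ | (σ <+: τ ∧ σ ≠ τ) ∧ τ ∈ V} → σ ∈ V)
    {σ : List Bool} (hσ : σ ∉ V) {X : Set (List Bool)} (hX : X ⊆ V) :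
    wt (X ∩ properExtensions σ) ≤ (2 : ℝ≥0∞) ^ (-(σ.length : ℤ)) :=
  calc wt (X ∩ properExtensions σ) ≤ wt {τ | (σ <+: τ ∧ σ ≠ τ) ∧ τ ∈ V} :=
        wt_mono fun _ hτ => ⟨hτ.2, hX hτ.1⟩
    _ ≤ _ := not_lt.mp (mt (hb σ) hσ)

theorem diff_subset_biUnion_prefixMinimals {U : ℕ → Set (List Bool)}
    (ha : ∀ s τ, τ ∈ U s → τ ∉ U (s+1) →
      ∃ σ, σ <+: τ ∧ σ ≠ τ ∧ σ ∈ U (s+1) ∧ σ ∉ U s) (s : ℕ) :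
    U s \ U (s+1) ⊆
      ⋃ σ ∈ prefixMinimals (U (s+1) \ U s), (U s \ U (s+1)) ∩ properExtensions σ := by
  rintro τ hτ
  obtain ⟨σ₁, hσ₁τ, hσ₁τ_ne, hσ₁_new, hσ₁_old⟩ := ha s τ hτ.1 hτ.2
  obtain ⟨σ, hσmin, hσσ₁⟩ :=
    exists_prefixMinimals_isPrefix (S := U (s+1) \ U s) ⟨hσ₁_new, hσ₁_old⟩
  have hστ_ne : σ ≠ τ := by
    rintro rfl
    exact hσ₁τ_ne (hσ₁τ.eq_of_length (le_antisymm hσ₁τ.length_le hσσ₁.length_le))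
  exact Set.mem_biUnion hσmin ⟨hτ, hσσ₁.trans hσ₁τ, hστ_ne⟩

theorem madison_weight_monotone_general (U : ℕ → Set (List Bool))
    (ha : ∀ s τ, τ ∈ U s → τ ∉ U (s+1) →
      ∃ σ, σ <+: τ ∧ σ ≠ τ ∧ σ ∈ U (s+1) ∧ σ ∉ U s)
    (hb : ∀ s σ, (2 : ℝ≥0∞) ^ (-(σ.length : ℤ)) <
        wt {τ | (σ <+: τ ∧ σ ≠ τ) ∧ τ ∈ U s} → σ ∈ U s) :
    (∀ s, wt (U s) ≤ wt (U (s+1))) ∧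
    (∀ s σ, σ ∈ U (s+1) → σ ∉ U s →
      (∀ σ', σ' ∈ U (s+1) → σ' ∉ U s → σ' <+: σ → σ' = σ) →
      wt ((U s \ U (s+1)) ∩ {τ | σ <+: τ ∧ σ ≠ τ}) ≤ (2 : ℝ≥0∞) ^ (-(σ.length : ℤ))) := by
  refine ⟨fun s => ?_, fun s σ _ hσ _ => wt_inter_properExtensions_le (hb s) hσ Set.sdiff_subset⟩
  have hlost : wt (U s \ U (s+1)) ≤ wt (U (s+1) \ U s) :=
    (wt_le_of_subset_biUnion (diff_subset_biUnion_prefixMinimals ha s) fun σ hσ =>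
      wt_inter_properExtensions_le (hb s) hσ.1.2 Set.sdiff_subset).trans
      (wt_mono fun _ hσ => hσ.1)
  calc wt (U s) = wt (U s ∩ U (s+1)) + wt (U s \ U (s+1)) := (wt_inter_add_wt_diff _ _).symm
    _ ≤ wt (U (s+1) ∩ U s) + wt (U (s+1) \ U s) := by rw [Set.inter_comm]; gcongr
    _ = wt (U (s+1)) := wt_inter_add_wt_diff _ _

/-- Weight monotonicity for Madison tests: under conditions (a) and (b), the weights
`wt(U_s)` are nondecreasing in `s`; more precisely, if `σ` is prefix-minimal in
`U_{s+1} \ U_s`, then the weight of the removed strings above `σ` is at most `2^{-|σ|}`. -/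
theorem madison_weight_monotone (U : ℕ → Set (List Bool)) (h0 : U 0 = ∅)
    (ha : ∀ s τ, τ ∈ U s → τ ∉ U (s+1) →
      ∃ σ, σ <+: τ ∧ σ ≠ τ ∧ σ ∈ U (s+1) ∧ σ ∉ U s)
    (hb : ∀ s σ, (2 : ℝ≥0∞) ^ (-(σ.length : ℤ)) <
        wt {τ | (σ <+: τ ∧ σ ≠ τ) ∧ τ ∈ U s} → σ ∈ U s) :
    (∀ s, wt (U s) ≤ wt (U (s+1))) ∧
    (∀ s σ, σ ∈ U (s+1) → σ ∉ U s →
      (∀ σ', σ' ∈ U (s+1) → σ' ∉ U s → σ' <+: σ → σ' = σ) →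
      wt ((U s \ U (s+1)) ∩ {τ | σ <+: τ ∧ σ ≠ τ}) ≤ (2 : ℝ≥0∞) ^ (-(σ.length : ℤ))) :=
  madison_weight_monotone_general U ha hb
end
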